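/- arXiv:1701.05214 — 6 statements merged into one kernel-verified Lean document; each statement's English description precedes it below -/
import Mathlib

section
/- Let p be an odd prime and set m = (p-1)/2. For integers a, b with m ≤ a ≤ p-1 and m ≤ b ≤ p-1, the binomial coefficient C(a+b, p-1) is divisible by p unless a = b = m, in which case C(a+b, p-1) = 1. -/
theorem stmt_3 (p : ℕ) (hp : p.Prime) (hodd : Odd p) (m a b : ℕ)
    (hm : m = (p - 1) / 2) (ha1 : m ≤ a) (ha2 : a ≤ p - 1) (hb1 : m ≤ b) (hb2 : b ≤ p - 1) :
    (a = m ∧ b = m → (a + b).choose (p - 1) = 1) ∧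
    (¬(a = m ∧ b = m) → p ∣ (a + b).choose (p - 1)) := by
  obtain ⟨k, hk⟩ := hodd
  refine ⟨fun ⟨ha, hb⟩ => ?_, fun hab => ?_⟩
  · rw [show a + b = p - 1 by omega, Nat.choose_self]
  · -- since 2m = p - 1, the sum a + b lies in [p, 2p - 2]
    exact hp.dvd_choose (by omega) (by omega) (by omega)
end

section
/- Let p be an odd prime, m = (p-1)/2, and let x, y be positive integers. Then the sum over all pairs (a, b) with m ≤ a, b ≤ p-1 of (-1)^(a+b) · C(a, m)^x · C(b, m)^x · C(a+b, p-1)^y · C(p-1, a) · C(p-1, b) is congruent to 1 modulo p (in particular, it is not divisible by p). -/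
/-!
Since `p ∣ C(n, p - 1)` for `p ≤ n ≤ 2p - 2`, only the pair `a = b = m` (where `a + b = p - 1`)
contributes modulo `p`. There `C(p - 1, m) ≡ (-1)^m`, so that term is `(-1)^(2m) · (-1)^m · (-1)^m = 1`.
-/

theorem Nat.Prime.choose_pred_eq_neg_one_pow {p : ℕ} (hp : p.Prime) {k : ℕ} (hk : k ≤ p - 1) :
    ((p - 1).choose k : ZMod p) = (-1) ^ k := by
  induction k with
  | zero => simp
  | succ k ih =>
    have hpascal : (p - 1).choose k + (p - 1).choose (k + 1) = p.choose (k + 1) := by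
      conv_rhs => rw [← Nat.sub_add_cancel hp.one_le]
      exact (Nat.choose_succ_succ _ _).symm
    have hsum : ((p - 1).choose k : ZMod p) + ((p - 1).choose (k + 1) : ZMod p) = 0 := by
      rw [← Nat.cast_add, hpascal, ZMod.natCast_eq_zero_iff]
      exact hp.dvd_choose_self k.succ_ne_zero (by omega)
    rw [eq_neg_of_add_eq_zero_right hsum, ih (by omega), pow_succ, mul_neg_one]

theorem Nat.Prime.choose_pred_eq_zero {p n : ℕ} (hp : p.Prime) (hpn : p ≤ n) (hn : n + 1 < 2 * p) :
    (n.choose (p - 1) : ZMod p) = 0 :=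
  (ZMod.natCast_eq_zero_iff _ p).mpr (hp.dvd_choose (by omega) (by omega) hpn)

theorem stmt_4_general (p : ℕ) (hp : p.Prime) (hodd : Odd p) (m x y : ℕ)
    (hm : m = (p - 1) / 2) (hy : 1 ≤ y) :
    (∑ a ∈ Finset.Icc m (p - 1), ∑ b ∈ Finset.Icc m (p - 1),
        (-1 : ZMod p) ^ (a + b) * (a.choose m : ZMod p) ^ x * (b.choose m : ZMod p) ^ x *
          ((a + b).choose (p - 1) : ZMod p) ^ y *
          ((p - 1).choose a : ZMod p) * ((p - 1).choose b : ZMod p)) = 1 := by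
  have hpm : p - 1 = m + m := by obtain ⟨k, rfl⟩ := hodd; omega
  have hmem : m ∈ Finset.Icc m (p - 1) := Finset.mem_Icc.mpr ⟨le_rfl, by omega⟩
  have hvanish : ∀ a ∈ Finset.Icc m (p - 1), ∀ b ∈ Finset.Icc m (p - 1), (a ≠ m ∨ b ≠ m) →
      ((a + b).choose (p - 1) : ZMod p) ^ y = 0 := by
    intro a ha b hb hab
    rw [Finset.mem_Icc] at ha hb
    rw [hp.choose_pred_eq_zero (by omega) (by omega), zero_pow (by omega)]
  rw [Finset.sum_eq_single_of_mem m hmem fun a ha ham => Finset.sum_eq_zero fun b hb => by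
    rw [hvanish a ha b hb (.inl ham), mul_zero, zero_mul, zero_mul]]
  rw [Finset.sum_eq_single_of_mem m hmem fun b hb hbm => by
    rw [hvanish m hmem b hb (.inr hbm), mul_zero, zero_mul, zero_mul]]
  rw [← hpm]
  simp only [Nat.choose_self, Nat.cast_one, one_pow, mul_one]
  rw [hp.choose_pred_eq_neg_one_pow (by omega), hpm, ← pow_add, ← pow_add]
  exact Even.neg_one_pow ⟨m + m, by ring⟩

theorem stmt_4 (p : ℕ) (hp : p.Prime) (hodd : Odd p) (m x y : ℕ)
    (hm : m = (p - 1) / 2) (hx : 1 ≤ x) (hy : 1 ≤ y) :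
    (∑ a ∈ Finset.Icc m (p - 1), ∑ b ∈ Finset.Icc m (p - 1),
        (-1 : ZMod p) ^ (a + b) * (a.choose m : ZMod p) ^ x * (b.choose m : ZMod p) ^ x *
          ((a + b).choose (p - 1) : ZMod p) ^ y *
          ((p - 1).choose a : ZMod p) * ((p - 1).choose b : ZMod p)) = 1 :=
  stmt_4_general p hp hodd m x y hm hy
end

section
/- Let p be an odd prime and q = p^e with e ≥ 1. Let k with 1 ≤ k ≤ q - 1 be a power of p. Then the polynomial B_k(X) = ((X+1)^(2k) − 1)·X^(q−1−k) − 2·X^(q−1) is a permutation polynomial of F_q. -/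
/-!
On `F_q` with `k = p ^ n < q`, Frobenius gives `(X + 1) ^ (2k) - 1 = X ^ (2k) + 2 X ^ k`, and on
`F_q^×` the factor `X ^ (q - 1 - k)` is the inverse of `X ^ k`, so `B_k` agrees with `X ^ k` as a
function on `F_q`. Powers of Frobenius permute a finite field.
-/

theorem FiniteField.add_one_pow_two_mul_sub_one_mul_sub_eq_pow {F : Type*} [Field F] [Fintype F]
    {p : ℕ} [ExpChar F p] {n : ℕ} (hn : p ^ n < Fintype.card F) (x : F) :
    ((x + 1) ^ (2 * p ^ n) - 1) * x ^ (Fintype.card F - 1 - p ^ n)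
      - 2 * x ^ (Fintype.card F - 1) = x ^ p ^ n := by
  have hk : p ^ n ≠ 0 := pow_ne_zero n (expChar_pos F p).ne'
  rcases eq_or_ne x 0 with rfl | hx
  · simp [zero_pow hk, zero_pow (show Fintype.card F - 1 ≠ 0 by omega)]
  · have hinv : x ^ p ^ n * x ^ (Fintype.card F - 1 - p ^ n) = 1 := by
      rw [← pow_add, Nat.add_sub_cancel' (by omega), FiniteField.pow_card_sub_one_eq_one x hx]
    rw [mul_comm 2, pow_mul, add_pow_expChar_pow, one_pow,
      FiniteField.pow_card_sub_one_eq_one x hx]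
    linear_combination (x ^ p ^ n + 2) * hinv

theorem stmt_6_general (p e k : ℕ) (hp : p.Prime)
    (hk2 : k ≤ p ^ e - 1) (hkpow : ∃ j : ℕ, k = p ^ j)
    (F : Type*) [Field F] [Fintype F] (hF : Fintype.card F = p ^ e) :
    Function.Bijective
      (fun x : F => ((x + 1) ^ (2 * k) - 1) * x ^ (p ^ e - 1 - k) - 2 * x ^ (p ^ e - 1)) := by
  obtain ⟨j, rfl⟩ := hkpow
  have : Fact p.Prime := ⟨hp⟩
  have : CharP F p := charP_of_card_eq_prime_pow hF
  have hlt : p ^ j < Fintype.card F := by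
    have := Fintype.one_lt_card (α := F); omega
  simp_rw [← hF, FiniteField.add_one_pow_two_mul_sub_one_mul_sub_eq_pow hlt]
  exact PerfectRing.bijective_frobenius

theorem stmt_6 (p e k : ℕ) (hp : p.Prime) (hodd : Odd p) (he : 1 ≤ e)
    (hk1 : 1 ≤ k) (hk2 : k ≤ p ^ e - 1) (hkpow : ∃ j : ℕ, k = p ^ j)
    (F : Type*) [Field F] [Fintype F] (hF : Fintype.card F = p ^ e) :
    Function.Bijective
      (fun x : F => ((x + 1) ^ (2 * k) - 1) * x ^ (p ^ e - 1 - k) - 2 * x ^ (p ^ e - 1)) :=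
  stmt_6_general p e k hp hk2 hkpow F hF
end

section
/- Let p be an odd prime, q = p^e with e ≥ 2, let 0 < t ≤ e-1, and let 0 ≤ u, v ≤ (p-1)/2 with s determined by 2s = q - 1 - 2(u + v·p^t). Then the base-p digit expansion of 2s is: digit p-1-2u in position 0, digit p-1-2v in position t, and digit p-1 in all other positions. Consequently, for 2 ≤ i ≤ q-2, the binomial coefficient C(i, 2s) is not divisible by p only if the base-p digits of i are p-1-a in position 0, p-1-b in position t, and p-1 elsewhere, for some 0 ≤ a ≤ 2u and 0 ≤ b ≤ 2v. -/
/-!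
Subtracting `2u + 2v·p^t` from `q - 1 = (p-1)(1 + p + ⋯ + p^(e-1))` causes no borrows, since
`2u, 2v ≤ p - 1`; so `2s` has the digit pattern `p-1-2u, …, p-1-2v, …, p-1`. By Lucas' theorem,
`p ∤ C(i, 2s)` forces every digit of `i` to dominate the corresponding digit of `2s`, which pins
all digits of `i` to `p - 1` except those in positions `0` and `t`.
-/

open Finset

namespace Nat

theorem sum_range_succ_mul_pow (c : ℕ → ℕ) (p e : ℕ) :
    ∑ j ∈ range (e + 1), c j * p ^ j = c 0 + p * ∑ j ∈ range e, c (j + 1) * p ^ j := by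
  rw [sum_range_succ', mul_sum, add_comm]
  simp only [pow_succ, pow_zero, mul_one]
  congr 1
  exact sum_congr rfl fun j _ => by ring

theorem sum_mul_pow_div_pow_mod {p e k : ℕ} {c : ℕ → ℕ} (hc : ∀ j < e, c j < p) (hk : k < e) :
    (∑ j ∈ range e, c j * p ^ j) / p ^ k % p = c k := by
  obtain ⟨e, rfl⟩ : ∃ e', e = e' + 1 := ⟨e - 1, by omega⟩
  have hc0 : c 0 < p := hc 0 (by omega)
  rw [sum_range_succ_mul_pow]
  induction k generalizing e c with
  | zero => rw [pow_zero, Nat.div_one, add_mul_mod_self_left, mod_eq_of_lt hc0]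
  | succ k ih =>
    rw [pow_succ', ← Nat.div_div_eq_div_mul, add_mul_div_left _ _ (by omega), div_eq_of_lt hc0,
      zero_add]
    obtain ⟨e, rfl⟩ : ∃ e', e = e' + 1 := ⟨e - 1, by omega⟩
    rw [sum_range_succ_mul_pow]
    exact ih (c := fun j => c (j + 1)) e (fun j hj => hc (j + 1) (by omega)) (by omega)
      (hc 1 (by omega))

theorem sum_range_sub_one_mul_pow {p : ℕ} (hp : 1 ≤ p) (e : ℕ) :
    ∑ j ∈ range e, (p - 1) * p ^ j = p ^ e - 1 := by
  rw [← mul_sum, mul_comm, geom_sum_mul_of_one_le hp]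

theorem sum_mul_pow_add_sum_mul_pow {p e : ℕ} (hp : 1 ≤ p) {c d : ℕ → ℕ}
    (hcd : ∀ j < e, c j + d j = p - 1) :
    ∑ j ∈ range e, c j * p ^ j + ∑ j ∈ range e, d j * p ^ j = p ^ e - 1 := by
  rw [← sum_add_distrib, ← sum_range_sub_one_mul_pow hp]
  exact sum_congr rfl fun j hj => by rw [← add_mul, hcd j (mem_range.mp hj)]

theorem div_pow_mod_le_of_not_dvd_choose {p n k : ℕ} (hp : p.Prime) (h : ¬p ∣ n.choose k)
    (j : ℕ) : k / p ^ j % p ≤ n / p ^ j % p := by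
  have hkn : k ≤ n := by
    by_contra hlt
    exact h (by rw [choose_eq_zero_of_lt (not_le.mp hlt)]; exact dvd_zero p)
  have hn : n < p ^ (n + j + 1) := (Nat.lt_pow_self hp.one_lt).trans_le' (by omega)
  have := Fact.mk hp
  by_contra hlt
  refine h (modEq_zero_iff_dvd.mp ((Choose.choose_modEq_prod_range_choose_nat hn
    (hkn.trans_lt hn)).trans ?_))
  rw [prod_eq_zero (f := fun i => (n / p ^ i % p).choose (k / p ^ i % p))
    (mem_range.mpr (by omega : j < n + j + 1)) (choose_eq_zero_of_lt (not_le.mp hlt))]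

def digitPattern (p t a b j : ℕ) : ℕ :=
  if j = 0 then p - 1 - a else if j = t then p - 1 - b else p - 1

section digitPattern

variable {p t a b : ℕ}

theorem sum_digitPattern_mul_pow (hp : 1 ≤ p) (ht : t ≠ 0) {e : ℕ} (hte : t < e)
    (ha : a ≤ p - 1) (hb : b ≤ p - 1) :
    ∑ j ∈ range e, digitPattern p t a b j * p ^ j = p ^ e - 1 - (a + b * p ^ t) := by
  set d : ℕ → ℕ := fun j => if j = 0 then a else if j = t then b else 0
  have hd : ∑ j ∈ range e, d j * p ^ j = a + b * p ^ t := by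
    rw [sum_eq_add_of_mem 0 t (mem_range.mpr (by omega)) (mem_range.mpr hte) (Ne.symm ht)
      fun j _ hj => by simp [d, hj.1, hj.2]]
    simp [d, ht]
  have hsum := sum_mul_pow_add_sum_mul_pow hp (c := digitPattern p t a b) (d := d) (e := e)
    fun j _ => by unfold digitPattern d; split_ifs <;> omega
  omega

theorem digitPattern_lt (hp : 0 < p) (j : ℕ) : digitPattern p t a b j < p := by
  unfold digitPattern; split_ifs <;> omega

theorem exists_digitPattern_of_le (hp : 0 < p) (ht : t ≠ 0) {e : ℕ} (hte : t < e) {i : ℕ}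
    (hi : ∀ j < e, digitPattern p t a b j ≤ i / p ^ j % p) :
    ∃ a' b', a' ≤ a ∧ b' ≤ b ∧ ∀ j < e, i / p ^ j % p = digitPattern p t a' b' j := by
  have hlt : ∀ j, i / p ^ j % p < p := fun j => mod_lt _ hp
  have h0 := hi 0 (by omega)
  have ht' := hi t hte
  simp only [digitPattern, if_pos, if_neg ht] at h0 ht'
  refine ⟨p - 1 - i / p ^ 0 % p, p - 1 - i / p ^ t % p, by omega, by omega, fun j hj => ?_⟩
  have hj' := hi j hj
  unfold digitPattern at hj' ⊢
  split_ifs at hj' ⊢ with h0' htj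
  · subst h0'; have := hlt 0; omega
  · subst htj; have := hlt j; omega
  · have := hlt j; omega

end digitPattern

end Nat

theorem stmt_12_general (p e t u v s : ℕ) (hp : p.Prime) (hodd : Odd p)
    (ht1 : 1 ≤ t) (ht2 : t ≤ e - 1)
    (hu : u ≤ (p - 1) / 2) (hv : v ≤ (p - 1) / 2)
    (hs : s = (p ^ e - 1) / 2 - (u + v * p ^ t)) :
    (∀ j < e, 2 * s / p ^ j % p =
      if j = 0 then p - 1 - 2 * u else if j = t then p - 1 - 2 * v else p - 1) ∧
    (∀ i, 2 ≤ i → i ≤ p ^ e - 2 → ¬ p ∣ i.choose (2 * s) →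
      ∃ a b, a ≤ 2 * u ∧ b ≤ 2 * v ∧
        ∀ j < e, i / p ^ j % p =
          if j = 0 then p - 1 - a else if j = t then p - 1 - b else p - 1) := by
  have ht0 : t ≠ 0 := by omega
  have hte : t < e := by omega
  have hpe : p ^ e % 2 = 1 := Nat.odd_iff.mp hodd.pow
  have h2s : 2 * s = ∑ j ∈ range e, Nat.digitPattern p t (2 * u) (2 * v) j * p ^ j := by
    rw [Nat.sum_digitPattern_mul_pow hp.one_lt.le ht0 hte (by omega) (by omega), mul_assoc]
    omega
  have hdigits : ∀ j < e, 2 * s / p ^ j % p = Nat.digitPattern p t (2 * u) (2 * v) j :=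
    fun j hj => h2s ▸ Nat.sum_mul_pow_div_pow_mod (fun k _ => Nat.digitPattern_lt hp.pos k) hj
  refine ⟨hdigits, fun i _ _ hnd => Nat.exists_digitPattern_of_le hp.pos ht0 hte fun j hj => ?_⟩
  exact hdigits j hj ▸ Nat.div_pow_mod_le_of_not_dvd_choose hp hnd j

theorem stmt_12 (p e t u v s : ℕ) (hp : p.Prime) (hodd : Odd p) (he : 2 ≤ e)
    (ht1 : 1 ≤ t) (ht2 : t ≤ e - 1)
    (hu : u ≤ (p - 1) / 2) (hv : v ≤ (p - 1) / 2)
    (hs : s = (p ^ e - 1) / 2 - (u + v * p ^ t)) :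
    (∀ j < e, 2 * s / p ^ j % p =
      if j = 0 then p - 1 - 2 * u else if j = t then p - 1 - 2 * v else p - 1) ∧
    (∀ i, 2 ≤ i → i ≤ p ^ e - 2 → ¬ p ∣ i.choose (2 * s) →
      ∃ a b, a ≤ 2 * u ∧ b ≤ 2 * v ∧
        ∀ j < e, i / p ^ j % p =
          if j = 0 then p - 1 - a else if j = t then p - 1 - b else p - 1) :=
  stmt_12_general p e t u v s hp hodd ht1 ht2 hu hv hs
end

section
/- Let p be an odd prime and q = p^e with e ≥ 1, and let 1 ≤ k ≤ q-1 with gcd(k, q-1) = 1 and k' the inverse of k mod q-1. Then A_k is a permutation polynomial of F_q if and only if gcd(k, q-1) = 1 and both of the following hold: (i) for all 1 ≤ s ≤ (q-1)/2, Σ_{2 ≤ i ≤ q-2} (-1)^i · C((k'·s)*, (k'·i)*) · C(i, 2s) ≡ 0 (mod p); (ii) for all 1 ≤ s < (q-1)/2, Σ_{2 ≤ i ≤ q-2} (-1)^i · C((k'·(s+(q-1)/2))*, (k'·i)*) · C(i, 2s) ≡ 0 (mod p). -/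
/-!
By Hermite's criterion, `f x = x ^ k * ((x + 1) ^ k - x ^ k)` permutes `𝔽_q` iff
`∑ₓ f x ^ t = 0` for `1 ≤ t ≤ q - 2`; the sum for `t = q - 1` is automatically `-1` because
`f` vanishes only at `0`. Expanding `f x ^ t` binomially, replacing `(x + 1) ^ (k j)` by
`(x + 1) ^ (k j)*` and using `∑ₓ x ^ m = -[q - 1 ∣ m]` turns the power sum into
`(-1) ^ (t + 1) ∑ⱼ (-1) ^ j C(t, j) C((k j)*, τ)` with `τ ≡ 2 k t`. Since `k` is invertible
modulo `q - 1`, `j ↦ (k j)*` permutes `{0, …, q - 2}` and preserves parity, which gives the sum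
of the criterion. Finally `t ↦ σ = (k t)*` permutes `{1, …, q - 2}`; `σ ≤ (q - 1) / 2` gives
condition (i) with `s = σ`, and `σ > (q - 1) / 2` gives condition (ii) with `s = σ - (q - 1) / 2`,
in both cases with `τ = 2 s`.
-/

/-- For `a > 0`, the representative of `a` modulo `q - 1` in `{1, ..., q-1}`; `star q 0 = 0`. -/
def star (q a : ℕ) : ℕ :=
  if a = 0 then 0 else if a % (q - 1) = 0 then q - 1 else a % (q - 1)

open Finset

section Star

variable {q a b j σ : ℕ}

lemma star_eq_zero_iff : star q a = 0 ↔ a = 0 := by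
  unfold _root_.star
  split_ifs with h0 h
  · simp [h0]
  · refine iff_of_false (fun hq => h0 ?_) h0
    rwa [hq, Nat.mod_zero] at h
  · exact iff_of_false h h0

lemma star_modEq (q a : ℕ) : star q a ≡ a [MOD q - 1] := by
  unfold _root_.star
  split_ifs with h0 h
  · rw [h0]
  · simp [Nat.ModEq, h]
  · exact Nat.mod_modEq a _

lemma star_eq_of_modEq (h : a ≡ b [MOD q - 1]) (ha : a ≠ 0) (hb1 : 1 ≤ b) (hb : b ≤ q - 1) :
    star q a = b := by
  unfold _root_.star
  rw [if_neg ha, h]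
  rcases hb.eq_or_lt with rfl | hb
  · simp
  · rw [Nat.mod_eq_of_lt hb, if_neg (by omega)]

lemma star_lt (hq : 1 < q) (ha : ¬ q - 1 ∣ a) : star q a < q - 1 := by
  have ha0 : a ≠ 0 := by rintro rfl; exact ha (dvd_zero _)
  unfold _root_.star
  rw [if_neg ha0, if_neg (mt Nat.dvd_of_mod_eq_zero ha)]
  exact Nat.mod_lt _ (by omega)

lemma star_mul_lt (ha : a.Coprime (q - 1)) (hj : j < q - 1) : star q (a * j) < q - 1 := by
  rcases eq_or_ne j 0 with rfl | hj0
  · exact hj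
  refine star_lt (by omega) fun hdvd => ?_
  exact absurd (Nat.le_of_dvd (by omega) (ha.symm.dvd_of_dvd_mul_left hdvd)) (by omega)

lemma mul_star_mul_modEq (hab : b * a ≡ 1 [MOD q - 1]) (j : ℕ) :
    b * star q (a * j) ≡ j [MOD q - 1] :=
  calc b * star q (a * j) ≡ b * (a * j) [MOD q - 1] := (star_modEq q _).mul_left b
    _ = b * a * j := (mul_assoc ..).symm
    _ ≡ 1 * j [MOD q - 1] := hab.mul_right j
    _ = j := one_mul j

lemma star_mul_star_mul (hab : b * a ≡ 1 [MOD q - 1]) (ha : a ≠ 0) (hb : b ≠ 0)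
    (hj : j ≤ q - 1) : star q (b * star q (a * j)) = j := by
  rcases eq_or_ne j 0 with rfl | hj0
  · rfl
  refine star_eq_of_modEq (mul_star_mul_modEq hab j) ?_ (by omega) hj
  exact mul_ne_zero hb (star_eq_zero_iff.not.2 (mul_ne_zero ha hj0))

lemma star_mul_mem_Icc (hb : b ≠ 0) (hb' : b.Coprime (q - 1)) (hσ : σ ∈ Icc 1 (q - 2)) :
    star q (b * σ) ∈ Icc 1 (q - 2) := by
  rw [mem_Icc] at hσ ⊢
  have := star_mul_lt hb' (j := σ) (by omega)
  have : star q (b * σ) ≠ 0 := star_eq_zero_iff.not.2 (mul_ne_zero hb (by omega))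
  omega

lemma forall_Icc_iff_forall_star_mul (hab : b * a ≡ 1 [MOD q - 1]) (ha : a ≠ 0) (hb : b ≠ 0)
    {P : ℕ → Prop} :
    (∀ t ∈ Icc 1 (q - 2), P t) ↔ ∀ σ ∈ Icc 1 (q - 2), P (star q (b * σ)) := by
  have hab' : a * b ≡ 1 [MOD q - 1] := by rwa [mul_comm]
  refine ⟨fun h σ hσ => h _ (star_mul_mem_Icc hb (Nat.coprime_of_mul_modEq_one a hab) hσ),
    fun h t ht => ?_⟩
  rw [← star_mul_star_mul hab ha hb (j := t) (by rw [mem_Icc] at ht; omega)]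
  exact h _ (star_mul_mem_Icc ha (Nat.coprime_of_mul_modEq_one b hab') ht)

lemma forall_Icc_iff_forall_halves (hq : Even (q - 1)) {P : ℕ → Prop} :
    (∀ σ ∈ Icc 1 (q - 2), P σ) ↔
      (∀ s, 1 ≤ s → s ≤ (q - 1) / 2 → P s) ∧
        ∀ s, 1 ≤ s → s < (q - 1) / 2 → P (s + (q - 1) / 2) := by
  obtain ⟨m, hm⟩ := hq
  refine ⟨fun h => ⟨fun s h1 h2 => h s ?_, fun s h1 h2 => h _ ?_⟩, fun ⟨h1, h2⟩ σ hσ => ?_⟩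
  · rw [mem_Icc]; omega
  · rw [mem_Icc]; omega
  rw [mem_Icc] at hσ
  by_cases hσm : σ ≤ (q - 1) / 2
  · exact h1 σ hσ.1 hσm
  · simpa [show σ - (q - 1) / 2 + (q - 1) / 2 = σ by omega] using
      h2 (σ - (q - 1) / 2) (by omega) (by omega)

lemma neg_one_pow_star_mul {R : Type*} [Ring R] (hq : Even (q - 1)) (ha : Odd a) (j : ℕ) :
    (-1 : R) ^ star q (a * j) = (-1) ^ j := by
  rw [neg_one_pow_eq_pow_mod_two, neg_one_pow_eq_pow_mod_two (n := j)]
  congr 1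
  calc star q (a * j) % 2 = a * j % 2 := (star_modEq q _).of_dvd (even_iff_two_dvd.1 hq)
    _ = j % 2 := by rw [Nat.mul_mod, Nat.odd_iff.1 ha, one_mul, Nat.mod_mod]

end Star

section Binomial

/-- The sums of conditions (i) and (ii), with `M = (k' s)*`, resp. `M = (k' (s + (q - 1) / 2))*`,
and `τ = 2 s`. -/
def criterionSum (R : Type*) [Ring R] (q k' M τ : ℕ) : R :=
  ∑ i ∈ Icc 2 (q - 2), (-1 : R) ^ i * (M.choose (star q (k' * i)) : R) * (i.choose τ : R)

lemma map_criterionSum {R S : Type*} [Ring R] [Ring S] (φ : R →+* S) (q k' M τ : ℕ) :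
    φ (criterionSum R q k' M τ) = criterionSum S q k' M τ := by
  simp [criterionSum]

lemma sum_choose_filter_modEq {n E : ℕ} (hE : E < n) (a : ℕ) :
    ∑ d ∈ range (E + 1) with d ≡ a [MOD n], E.choose d = E.choose (a % n) := by
  have hfilter : {d ∈ range (E + 1) | d ≡ a [MOD n]} = {d ∈ range (E + 1) | d = a % n} :=
    filter_congr fun d hd => by
      rw [Nat.ModEq, Nat.mod_eq_of_lt (by rw [mem_range] at hd; omega)]
  rw [hfilter, sum_filter, sum_ite_eq']
  split_ifs with h
  · rfl
  · rw [Nat.choose_eq_zero_of_lt (by rw [mem_range] at h; omega)]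

lemma sum_choose_star_mul_eq_criterionSum {R : Type*} [CommRing R] {q k k' M τ : ℕ}
    (hinv : k' * k ≡ 1 [MOD q - 1]) (hk : k ≠ 0) (hk' : k' ≠ 0) (hq : Even (q - 1))
    (hM : M < q - 1) (hτ : 2 ≤ τ) :
    ∑ j ∈ range (M + 1), (-1 : R) ^ j * (M.choose j : R) * ((star q (k * j)).choose τ : R) =
      criterionSum R q k' M τ := by
  have hinv' : k * k' ≡ 1 [MOD q - 1] := by rwa [mul_comm]
  have hkodd : Odd k :=
    (Nat.odd_mul.1 (Nat.odd_iff.2 (hinv.of_dvd (even_iff_two_dvd.1 hq)))).2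
  calc ∑ j ∈ range (M + 1), (-1 : R) ^ j * (M.choose j : R) * ((star q (k * j)).choose τ : R)
      = ∑ j ∈ range (q - 1),
          (-1 : R) ^ j * (M.choose j : R) * ((star q (k * j)).choose τ : R) :=
        sum_subset (range_subset_range.2 (by omega)) fun j _ hj => by
          rw [mem_range, not_lt] at hj
          rw [Nat.choose_eq_zero_of_lt (by omega), Nat.cast_zero, mul_zero, zero_mul]
    _ = ∑ i ∈ range (q - 1),
          (-1 : R) ^ i * (M.choose (star q (k' * i)) : R) * (i.choose τ : R) := by
        refine sum_nbij' (fun j => star q (k * j)) (fun i => star q (k' * i)) ?_ ?_ ?_ ?_ ?_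
        · intro j hj
          simpa using star_mul_lt (Nat.coprime_of_mul_modEq_one k' hinv') (mem_range.1 hj)
        · intro i hi
          simpa using star_mul_lt (Nat.coprime_of_mul_modEq_one k hinv) (mem_range.1 hi)
        · intro j hj
          exact star_mul_star_mul hinv hk hk' (mem_range.1 hj).le
        · intro i hi
          exact star_mul_star_mul hinv' hk' hk (mem_range.1 hi).le
        · intro j hj
          rw [star_mul_star_mul hinv hk hk' (mem_range.1 hj).le, neg_one_pow_star_mul hq hkodd]
    _ = criterionSum R q k' M τ := by
        refine (sum_subset (fun i hi => ?_) fun i hi hi' => ?_).symm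
        · rw [mem_Icc] at hi; rw [mem_range]; omega
        · rw [mem_range] at hi; rw [mem_Icc] at hi'
          rw [Nat.choose_eq_zero_of_lt (n := i) (by omega), Nat.cast_zero, mul_zero]

lemma pow_mul_add_one_pow_sub_pow_pow {R : Type*} [CommRing R] (x : R) (k M : ℕ) :
    (x ^ k * ((x + 1) ^ k - x ^ k)) ^ M = ∑ j ∈ range (M + 1),
      (-1) ^ (j + M) * (M.choose j : R) * (x ^ (k * (2 * M - j)) * (x + 1) ^ (k * j)) := by
  rw [mul_pow, sub_pow, mul_sum]
  refine sum_congr rfl fun j hj => ?_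
  have hexp : k * (2 * M - j) = k * M + k * (M - j) := by
    rw [← mul_add]; congr 1; rw [mem_range] at hj; omega
  rw [hexp, pow_add x, pow_mul x k M, pow_mul x k (M - j)]
  ring

lemma sum_sub_pow_eq_of_sum_pow_eq {ι R : Type*} [CommRing R] (s : Finset ι) {f g : ι → R}
    {N : ℕ} (h : ∀ j ≤ N, ∑ x ∈ s, f x ^ j = ∑ x ∈ s, g x ^ j) (a : R) :
    ∑ x ∈ s, (f x - a) ^ N = ∑ x ∈ s, (g x - a) ^ N := by
  simp only [sub_eq_add_neg, add_pow]
  rw [sum_comm, sum_comm (s := s)]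
  refine sum_congr rfl fun j hj => ?_
  rw [mem_range] at hj
  rw [← sum_mul, ← sum_mul, ← sum_mul, ← sum_mul, h j (by omega)]

end Binomial

section FiniteField

variable {F : Type*} [Field F] [Fintype F]

local notation "q" => Fintype.card F

lemma pow_star (x : F) (a : ℕ) : x ^ star q a = x ^ a := by
  rcases eq_or_ne x 0 with rfl | hx
  · rcases eq_or_ne a 0 with rfl | ha
    · rfl
    · rw [zero_pow ha, zero_pow (star_eq_zero_iff.not.2 ha)]
  · exact pow_eq_pow_of_modEq (star_modEq q a) (FiniteField.pow_card_sub_one_eq_one x hx)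

lemma pow_injective_of_mul_modEq_one {a b : ℕ} (hab : a * b ≡ 1 [MOD q - 1]) (ha : a ≠ 0)
    (hb : b ≠ 0) : Function.Injective (fun x : F => x ^ a) := by
  have hq : 1 < q := Fintype.one_lt_card
  have hinv : ∀ x : F, (x ^ a) ^ b = x := fun x => by
    rw [← pow_mul, ← pow_star, star_eq_of_modEq hab (mul_ne_zero ha hb) le_rfl (by omega),
      pow_one]
  exact Function.LeftInverse.injective (g := fun y : F => y ^ b) hinv

lemma sum_pow_eq_ite {m : ℕ} (hm : m ≠ 0) :
    ∑ x : F, x ^ m = if q - 1 ∣ m then -1 else 0 := by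
  classical
  rw [← FiniteField.sum_pow_units F m, ← sum_erase_add _ _ (mem_univ 0), zero_pow hm, add_zero]
  refine sum_bij' (fun x hx => Units.mk0 x (ne_of_mem_erase hx)) (fun u _ => u)
    ?_ ?_ ?_ ?_ ?_ <;> simp

lemma sum_pow_card_sub_one : ∑ x : F, x ^ (q - 1) = -1 := by
  rw [sum_pow_eq_ite (by have : 1 < q := Fintype.one_lt_card; omega), if_pos dvd_rfl]

lemma bijective_iff_sum_pow_eq (f : F → F) :
    Function.Bijective f ↔ ∀ j ≤ q - 1, ∑ x, f x ^ j = ∑ x, x ^ j := by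
  refine ⟨fun hf j _ => hf.sum_comp (· ^ j), fun h => ?_⟩
  refine Function.Surjective.bijective_of_finite fun a => ?_
  by_contra! hfa
  -- `∑ₓ (f x - a) ^ (q - 1)` is minus the number of preimages of `a`; by the power sums it
  -- equals the same sum for the identity, which is `-1`
  have hne : ∑ x, (f x - a) ^ (q - 1) = 0 := by
    simp [FiniteField.pow_card_sub_one_eq_one _ (sub_ne_zero.2 (hfa _))]
  rw [sum_sub_pow_eq_of_sum_pow_eq univ h,
    Fintype.sum_equiv (Equiv.subRight a) (fun x => (x - a) ^ (q - 1)) (· ^ (q - 1))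
      fun _ => rfl,
    sum_pow_card_sub_one] at hne
  exact one_ne_zero (neg_eq_zero.1 hne)

lemma bijective_iff_forall_sum_pow_eq_zero {f : F → F} (hf : ∀ x, f x = 0 ↔ x = 0) :
    Function.Bijective f ↔ ∀ t ∈ Icc 1 (q - 2), ∑ x, f x ^ t = 0 := by
  have hq : 1 < q := Fintype.one_lt_card
  rw [bijective_iff_sum_pow_eq]
  refine ⟨fun h t ht => ?_, fun h j hj => ?_⟩
  · rw [mem_Icc] at ht
    rw [h t (by omega), FiniteField.sum_pow_lt_card_sub_one F t (by omega)]
  rcases eq_or_ne j 0 with rfl | hj0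
  · simp
  rcases hj.eq_or_lt with rfl | hj
  · refine sum_congr rfl fun x _ => ?_
    rcases eq_or_ne x 0 with rfl | hx
    · rw [(hf 0).2 rfl]
    · rw [FiniteField.pow_card_sub_one_eq_one x hx,
        FiniteField.pow_card_sub_one_eq_one _ ((hf x).not.2 hx)]
  · rw [h j (mem_Icc.2 ⟨by omega, by omega⟩), FiniteField.sum_pow_lt_card_sub_one F j hj]

lemma sum_pow_mul_one_add_pow {D : ℕ} (hD : D ≠ 0) (E : ℕ) :
    ∑ x : F, x ^ D * (1 + x) ^ E =
      -∑ d ∈ range (E + 1) with d ≡ D + E [MOD q - 1], (E.choose d : F) := by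
  calc ∑ x : F, x ^ D * (1 + x) ^ E
      = ∑ x : F, ∑ d ∈ range (E + 1), x ^ (D + E - d) * (E.choose d : F) := by
        refine sum_congr rfl fun x _ => ?_
        rw [add_pow, mul_sum]
        refine sum_congr rfl fun d hd => ?_
        rw [one_pow, one_mul, ← mul_assoc, ← pow_add]
        congr 2
        rw [mem_range] at hd; omega
    _ = ∑ d ∈ range (E + 1), (∑ x : F, x ^ (D + E - d)) * (E.choose d : F) := by
        rw [sum_comm]; simp_rw [sum_mul]
    _ = -∑ d ∈ range (E + 1) with d ≡ D + E [MOD q - 1], (E.choose d : F) := by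
        rw [sum_filter, ← sum_neg_distrib]
        refine sum_congr rfl fun d hd => ?_
        rw [mem_range] at hd
        have hdvd : q - 1 ∣ D + E - d ↔ d ≡ D + E [MOD q - 1] :=
          (Nat.modEq_iff_dvd' (by omega)).symm
        rw [sum_pow_eq_ite (by omega)]
        simp only [hdvd]
        split_ifs <;> simp

lemma sum_pow_mul_add_one_pow_eq_neg_choose {k j M : ℕ} (hk : k.Coprime (q - 1)) (hk0 : k ≠ 0)
    (hj : j ≤ M) (hM0 : M ≠ 0) (hM : M < q - 1) :
    ∑ x : F, x ^ (k * (2 * M - j)) * (x + 1) ^ (k * j) =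
      -((star q (k * j)).choose (2 * k * M % (q - 1)) : F) := by
  have hmod : k * (2 * M - j) + star q (k * j) ≡ 2 * k * M [MOD q - 1] :=
    calc k * (2 * M - j) + star q (k * j) ≡ k * (2 * M - j) + k * j [MOD q - 1] :=
          (star_modEq q _).add_left _
      _ = 2 * k * M := by rw [← mul_add, Nat.sub_add_cancel (by omega)]; ring
  have hreduce : ∀ x : F, x ^ (k * (2 * M - j)) * (x + 1) ^ (k * j) =
      x ^ (k * (2 * M - j)) * (1 + x) ^ star q (k * j) := fun x => by rw [pow_star, add_comm]
  rw [sum_congr rfl fun x _ => hreduce x, sum_pow_mul_one_add_pow (mul_ne_zero hk0 (by omega)),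
    ← Nat.cast_sum, sum_choose_filter_modEq (star_mul_lt hk (by omega)), hmod]

lemma sum_pow_eq_neg_one_pow_mul_criterionSum {k k' M τ : ℕ} (hinv : k' * k ≡ 1 [MOD q - 1])
    (hk : k ≠ 0) (hk' : k' ≠ 0) (hq : Even (q - 1)) (hM : M ∈ Icc 1 (q - 2)) (hτ2 : 2 ≤ τ)
    (hτ : τ ≤ q - 1) (hτM : τ ≡ 2 * k * M [MOD q - 1]) :
    ∑ x : F, (x ^ k * ((x + 1) ^ k - x ^ k)) ^ M = (-1) ^ (M + 1) * criterionSum F q k' M τ := by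
  rw [mem_Icc] at hM
  have hexpand : ∑ x : F, (x ^ k * ((x + 1) ^ k - x ^ k)) ^ M = (-1) ^ (M + 1) *
      ∑ j ∈ range (M + 1),
        (-1) ^ j * (M.choose j : F) * ((star q (k * j)).choose (τ % (q - 1)) : F) := by
    simp_rw [pow_mul_add_one_pow_sub_pow_pow]
    rw [sum_comm, mul_sum]
    refine sum_congr rfl fun j hj => ?_
    rw [mem_range] at hj
    rw [← mul_sum, sum_pow_mul_add_one_pow_eq_neg_choose
      (Nat.coprime_of_mul_modEq_one k' (by rwa [mul_comm])) hk (by omega) (by omega) (by omega),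
      hτM]
    ring
  rw [hexpand]
  rcases hτ.eq_or_lt with rfl | hτ
  · -- `τ = q - 1`: the expansion is `(1 - 1) ^ M` and every `C(i, q - 1)` in the criterion is `0`
    have hcrit : criterionSum F q k' M (q - 1) = 0 := sum_eq_zero fun i hi => by
      rw [mem_Icc] at hi
      rw [Nat.choose_eq_zero_of_lt (n := i) (by omega), Nat.cast_zero, mul_zero]
    have halt := add_pow (-1 : F) 1 M
    simp only [one_pow, mul_one, neg_add_cancel, zero_pow (by omega : M ≠ 0)] at halt
    simp [hcrit, ← halt]
  · rw [Nat.mod_eq_of_lt hτ, sum_choose_star_mul_eq_criterionSum hinv hk hk' hq (by omega) hτ2]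

lemma pow_mul_add_one_pow_sub_pow_eq_zero_iff {k k' : ℕ} (hinv : k' * k ≡ 1 [MOD q - 1])
    (hk : k ≠ 0) (hk' : k' ≠ 0) (x : F) : x ^ k * ((x + 1) ^ k - x ^ k) = 0 ↔ x = 0 := by
  refine ⟨fun h => ?_, fun h => by rw [h, zero_pow hk, zero_mul]⟩
  rcases mul_eq_zero.1 h with h | h
  · exact (pow_eq_zero_iff hk).1 h
  · have := pow_injective_of_mul_modEq_one (by rwa [mul_comm]) hk hk' (sub_eq_zero.1 h)
    simp at this

lemma sum_pow_star_mul_eq_zero_iff {p k k' σ τ : ℕ} [Fact p.Prime] [CharP F p]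
    (hinv : k' * k ≡ 1 [MOD q - 1]) (hk : k ≠ 0) (hk' : k' ≠ 0) (hq : Even (q - 1))
    (hσ : σ ∈ Icc 1 (q - 2)) (hτ2 : 2 ≤ τ) (hτ : τ ≤ q - 1) (hτσ : τ ≡ 2 * σ [MOD q - 1]) :
    ∑ x : F, (x ^ k * ((x + 1) ^ k - x ^ k)) ^ star q (k' * σ) = 0 ↔
      criterionSum (ZMod p) q k' (star q (k' * σ)) τ = 0 := by
  have hM := star_mul_mem_Icc hk' (Nat.coprime_of_mul_modEq_one k hinv) hσ
  have hτM : τ ≡ 2 * k * star q (k' * σ) [MOD q - 1] := by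
    rw [mul_assoc]
    exact hτσ.trans ((mul_star_mul_modEq (by rwa [mul_comm]) σ).symm.mul_left 2)
  rw [sum_pow_eq_neg_one_pow_mul_criterionSum hinv hk hk' hq hM hτ2 hτ hτM, mul_eq_zero,
    or_iff_right (pow_ne_zero _ (neg_ne_zero.2 one_ne_zero)),
    ← map_criterionSum (ZMod.castHom dvd_rfl F),
    map_eq_zero_iff _ (ZMod.castHom dvd_rfl F).injective]

end FiniteField

theorem stmt_17_general (p e k k' : ℕ) (hp : p.Prime) (hodd : Odd p)
    (hk1 : 1 ≤ k) (hgcdk : Nat.gcd k (p ^ e - 1) = 1)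
    (hk'1 : 1 ≤ k') (hinv : k' * k ≡ 1 [MOD p ^ e - 1])
    (F : Type*) [Field F] [Fintype F] (hF : Fintype.card F = p ^ e) :
    Function.Bijective (fun x : F => x ^ k * ((x + 1) ^ k - x ^ k)) ↔
      (Nat.gcd k (p ^ e - 1) = 1 ∧
        (∀ s, 1 ≤ s → s ≤ (p ^ e - 1) / 2 →
          (∑ i ∈ Finset.Icc 2 (p ^ e - 2),
              (-1 : ZMod p) ^ i *
                ((star (p ^ e) (k' * s)).choose (star (p ^ e) (k' * i)) : ZMod p) *
                (i.choose (2 * s) : ZMod p)) = 0) ∧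
        (∀ s, 1 ≤ s → s < (p ^ e - 1) / 2 →
          (∑ i ∈ Finset.Icc 2 (p ^ e - 2),
              (-1 : ZMod p) ^ i *
                ((star (p ^ e) (k' * (s + (p ^ e - 1) / 2))).choose
                  (star (p ^ e) (k' * i)) : ZMod p) *
                (i.choose (2 * s) : ZMod p)) = 0)) := by
  have : Fact p.Prime := ⟨hp⟩
  have : CharP F p := charP_of_card_eq_prime_pow hF
  have hq : Even (p ^ e - 1) := hodd.pow.tsub_odd odd_one
  rw [← hF] at hq hinv hgcdk ⊢
  rw [and_iff_right hgcdk]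
  have hshift (s : ℕ) :
      2 * s ≡ 2 * (s + (Fintype.card F - 1) / 2) [MOD Fintype.card F - 1] := by
    rw [Nat.ModEq, mul_add, Nat.mul_div_cancel' (even_iff_two_dvd.1 hq), Nat.add_mod_right]
  refine (bijective_iff_forall_sum_pow_eq_zero
    (pow_mul_add_one_pow_sub_pow_eq_zero_iff hinv (by omega) (by omega))).trans <|
    (forall_Icc_iff_forall_star_mul hinv (by omega) (by omega)).trans <|
    (forall_Icc_iff_forall_halves hq).trans <|
    and_congr (forall₃_congr fun s hs1 hs2 => ?_) (forall₃_congr fun s hs1 hs2 => ?_)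
  · exact sum_pow_star_mul_eq_zero_iff hinv (by omega) (by omega) hq (mem_Icc.2 ⟨hs1, by omega⟩)
      (by omega) (by omega) rfl
  · exact sum_pow_star_mul_eq_zero_iff hinv (by omega) (by omega) hq
      (mem_Icc.2 ⟨by omega, by omega⟩) (by omega) (by omega) (hshift s)

theorem stmt_17 (p e k k' : ℕ) (hp : p.Prime) (hodd : Odd p) (he : 1 ≤ e)
    (hk1 : 1 ≤ k) (hk2 : k ≤ p ^ e - 1) (hgcdk : Nat.gcd k (p ^ e - 1) = 1)
    (hk'1 : 1 ≤ k') (hk'2 : k' ≤ p ^ e - 2) (hinv : k' * k ≡ 1 [MOD p ^ e - 1])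
    (F : Type*) [Field F] [Fintype F] (hF : Fintype.card F = p ^ e) :
    Function.Bijective (fun x : F => x ^ k * ((x + 1) ^ k - x ^ k)) ↔
      (Nat.gcd k (p ^ e - 1) = 1 ∧
        (∀ s, 1 ≤ s → s ≤ (p ^ e - 1) / 2 →
          (∑ i ∈ Finset.Icc 2 (p ^ e - 2),
              (-1 : ZMod p) ^ i *
                ((star (p ^ e) (k' * s)).choose (star (p ^ e) (k' * i)) : ZMod p) *
                (i.choose (2 * s) : ZMod p)) = 0) ∧
        (∀ s, 1 ≤ s → s < (p ^ e - 1) / 2 →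
          (∑ i ∈ Finset.Icc 2 (p ^ e - 2),
              (-1 : ZMod p) ^ i *
                ((star (p ^ e) (k' * (s + (p ^ e - 1) / 2))).choose
                  (star (p ^ e) (k' * i)) : ZMod p) *
                (i.choose (2 * s) : ZMod p)) = 0)) :=
  stmt_17_general p e k k' hp hodd hk1 hgcdk hk'1 hinv F hF
end

section
/- Let p be an odd prime, m = (p-1)/2, and let x ≥ 1 be an integer. Then Σ_{a=m}^{p-1} Σ_{b=m}^{p-1} (-1)^(a+b) · C(a,m)^x · C(b,m)^x · C(a+b, p-1) · C(p-1, a) · C(p-1, b) ≡ C(p-1, m)^2 ≡ 1 (mod p), using that C(p-1, m) ≡ (-1)^m (mod p). -/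
/-!
Modulo `p`, `C(a + b, p - 1)` vanishes whenever `p ≤ a + b ≤ 2p - 2`, since then `p` divides it.
For `m ≤ a, b ≤ p - 1` this covers every pair except `a = b = m`, where `a + b = p - 1`, so the
double sum collapses to the single term `C(p - 1, m)²`. Finally `C(p - 1, k) ≡ (-1)^k` for
`k < p`, read off from `∑_{i ≤ k} (-1)^i C(p, i) = (-1)^k C(p - 1, k)` since `p ∣ C(p, i)` for
`0 < i < p`.
-/

open Finset

theorem ZMod.natCast_choose_pred_eq_zero {p n : ℕ} [Fact p.Prime] (h₁ : p ≤ n)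
    (h₂ : n < 2 * p - 1) : (n.choose (p - 1) : ZMod p) = 0 := by
  rw [ZMod.natCast_eq_zero_iff]
  exact (Fact.out : p.Prime).dvd_choose (by omega) (by omega) h₁

theorem ZMod.natCast_choose_pred_eq_neg_one_pow {p k : ℕ} [Fact p.Prime] (hk : k < p) :
    ((p - 1).choose k : ZMod p) = (-1) ^ k := by
  have hp : p.Prime := Fact.out
  have altSum := congrArg (Int.cast : ℤ → ZMod p)
    (Int.alternating_sum_range_choose_eq_choose (n := p - 1) (m := k))
  rw [Nat.sub_add_cancel hp.one_le] at altSum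
  have hvanish : ∀ i ∈ range (k + 1), i ≠ 0 → ((-1) ^ i * p.choose i : ZMod p) = 0 := by
    intro i hi hi0
    rw [(ZMod.natCast_eq_zero_iff _ _).2 (hp.dvd_choose_self hi0 (by grind)), mul_zero]
  have hsq : ((-1 : ZMod p) ^ k) ^ 2 = 1 := by rw [← pow_mul, Even.neg_one_pow ⟨k, by ring⟩]
  push_cast at altSum
  rw [sum_eq_single_of_mem 0 (by simp) hvanish, pow_zero, Nat.choose_zero_right, Nat.cast_one,
    one_mul] at altSum
  linear_combination (-(-1) ^ k) * altSum - ((p - 1).choose k : ZMod p) * hsq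

theorem stmt_18_general (p m x : ℕ) (hp : p.Prime) (hodd : Odd p)
    (hm : m = (p - 1) / 2) :
    (∑ a ∈ Finset.Icc m (p - 1), ∑ b ∈ Finset.Icc m (p - 1),
        (-1 : ZMod p) ^ (a + b) * (a.choose m : ZMod p) ^ x * (b.choose m : ZMod p) ^ x *
          ((a + b).choose (p - 1) : ZMod p) *
          ((p - 1).choose a : ZMod p) * ((p - 1).choose b : ZMod p))
      = ((p - 1).choose m : ZMod p) ^ 2 ∧
    ((p - 1).choose m : ZMod p) = (-1) ^ m ∧
    ((p - 1).choose m : ZMod p) ^ 2 = 1 := by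
  have : Fact p.Prime := ⟨hp⟩
  have hp0 := hp.pos
  have h2m : m + m = p - 1 := by rcases hodd with ⟨k, rfl⟩; omega
  have hchoose : ((p - 1).choose m : ZMod p) = (-1) ^ m :=
    ZMod.natCast_choose_pred_eq_neg_one_pow (by omega)
  refine ⟨?_, hchoose, by rw [hchoose, ← pow_mul, Even.neg_one_pow ⟨m, by ring⟩]⟩
  rw [← sum_product', sum_eq_single_of_mem (m, m) (by simp only [mem_product, mem_Icc]; omega)]
  · simp only [h2m, Nat.choose_self, Nat.cast_one, mul_one, one_pow]
    rw [Even.neg_one_pow ⟨m, h2m.symm⟩]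
    ring
  · rintro ⟨a, b⟩ hab hne
    simp only [mem_product, mem_Icc] at hab
    have hpab : p ≤ a + b := by
      by_contra
      exact hne (Prod.ext (by omega) (by omega))
    rw [ZMod.natCast_choose_pred_eq_zero hpab (by omega)]
    ring

theorem stmt_18 (p m x : ℕ) (hp : p.Prime) (hodd : Odd p)
    (hm : m = (p - 1) / 2) (hx : 1 ≤ x) :
    (∑ a ∈ Finset.Icc m (p - 1), ∑ b ∈ Finset.Icc m (p - 1),
        (-1 : ZMod p) ^ (a + b) * (a.choose m : ZMod p) ^ x * (b.choose m : ZMod p) ^ x *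
          ((a + b).choose (p - 1) : ZMod p) *
          ((p - 1).choose a : ZMod p) * ((p - 1).choose b : ZMod p))
      = ((p - 1).choose m : ZMod p) ^ 2 ∧
    ((p - 1).choose m : ZMod p) = (-1) ^ m ∧
    ((p - 1).choose m : ZMod p) ^ 2 = 1 :=
  stmt_18_general p m x hp hodd hm
end
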